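/- arXiv:1901.06806 — 2 statements merged into one kernel-verified Lean document; each statement's English description precedes it below -/
import Mathlib

section
/- If P is a finitely generated projective faithful module over a commutative ring R, then the endomorphism algebra End_R(P) is an Azumaya R-algebra. In particular, endomorphism algebras of faithful finite projective modules represent the trivial class of Azumaya algebras. -/
open TensorProduct in
/-- The canonical map `A ⊗[R] Aᵐᵒᵖ →ₗ[R] Module.End R A`, sending `a ⊗ b` to
`x ↦ a * x * b.unop`. -/
noncomputable def mulLeftRight (R A : Type*) [CommRing R] [Ring A] [Algebra R A] :
    A ⊗[R] Aᵐᵒᵖ →ₗ[R] Module.End R A :=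
  TensorProduct.lift <|
    LinearMap.mk₂ R
      (fun a b => (LinearMap.mulRight R b.unop) ∘ₗ (LinearMap.mulLeft R a))
      (fun a a' b => by ext x; simp [add_mul, mul_add])
      (fun r a b => by ext x; simp [smul_mul_assoc, mul_smul_comm])
      (fun a b b' => by ext x; simp [add_mul, mul_add])
      (fun r a b => by ext x; simp [smul_mul_assoc, mul_smul_comm])

/-- An `R`-algebra `A` is *Azumaya* if it is a finitely generated projective faithful
`R`-module and the canonical map `A ⊗[R] Aᵐᵒᵖ → Module.End R A`,
`a ⊗ b ↦ (x ↦ a * x * b)`, is bijective. -/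
def IsAzumaya' (R A : Type*) [CommRing R] [Ring A] [Algebra R A] : Prop :=
  Module.Finite R A ∧ Module.Projective R A ∧ FaithfulSMul R A ∧
    Function.Bijective (mulLeftRight R A)


/-! Choose a finite dual basis `(xᵢ, fᵢ)` of `P`, so that `v = ∑ᵢ fᵢ(v) xᵢ`, and let
`eᵢⱼ = (f j).smulRight (x i) : v ↦ fⱼ(v) xᵢ`. These behave like matrix units up to scalars:
`eₖᵢ c eⱼₖ = fᵢ(c xⱼ) eₖₖ`, `∑ₖ eₖₖ = 1` and `c = ∑ᵢⱼ fᵢ(c xⱼ) eᵢⱼ`. Hence, exactly as for matrix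
algebras, `F ↦ ∑ᵢⱼₖ F(eᵢⱼ) eₖᵢ ⊗ eⱼₖ` inverts `a ⊗ b ↦ (c ↦ a c b)`. Finiteness and projectivity
of `End P` hold because it is a retract of `End Rⁿ`. -/

open TensorProduct MulOpposite

namespace Module.End

variable {R : Type*} [CommSemiring R]

section Sandwich

variable {M N : Type*} [AddCommMonoid M] [Module R M] [AddCommMonoid N] [Module R N]

def sandwich (r : N →ₗ[R] M) (s : M →ₗ[R] N) : Module.End R N →ₗ[R] Module.End R M where
  toFun d := r ∘ₗ d ∘ₗ s
  map_add' d d' := by ext; simp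
  map_smul' c d := by ext; simp

@[simp]
theorem sandwich_apply (r : N →ₗ[R] M) (s : M →ₗ[R] N) (d : Module.End R N) :
    sandwich r s d = r ∘ₗ d ∘ₗ s :=
  rfl

theorem sandwich_comp_sandwich {r : N →ₗ[R] M} {s : M →ₗ[R] N} (h : r ∘ₗ s = LinearMap.id) :
    sandwich r s ∘ₗ sandwich s r = LinearMap.id := by
  have hrs (v : M) : r (s v) = v := congr($h v)
  ext d v
  simp [hrs]

instance faithfulSMul [FaithfulSMul R M] : FaithfulSMul R (Module.End R M) :=
  ⟨fun h => eq_of_smul_eq_smul fun v => by simpa using congr($(h 1) v)⟩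

end Sandwich

section DualBasis

variable {P : Type*} [AddCommMonoid P] [Module R P] {ι : Type*} [Fintype ι]
  {x : ι → P} {f : ι → Module.Dual R P}

theorem smulRight_mul_mul_smulRight (g g' : Module.Dual R P) (y y' : P) (c : Module.End R P) :
    g.smulRight y * c * g'.smulRight y' = g (c y') • g'.smulRight y := by
  ext v
  simp [smul_smul, mul_comm]

theorem sum_smulRight_eq_one (hxf : ∀ v, ∑ i, f i v • x i = v) :
    ∑ i, (f i).smulRight (x i) = 1 := by
  ext v
  simp [hxf]

theorem sum_sum_smul_smulRight (hxf : ∀ v, ∑ i, f i v • x i = v) (c : Module.End R P) :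
    ∑ i, ∑ j, f i (c (x j)) • (f j).smulRight (x i) = c := by
  ext v
  simp only [LinearMap.sum_apply, LinearMap.smul_apply, LinearMap.smulRight_apply]
  calc ∑ i, ∑ j, f i (c (x j)) • f j v • x i
      = ∑ j, f j v • ∑ i, f i (c (x j)) • x i := by
        rw [Finset.sum_comm]
        simp only [Finset.smul_sum, smul_comm (f _ v)]
    _ = c v := by simp only [hxf, ← map_smul, ← map_sum]

variable (x f) in
def mulLeftRightInv :
    Module.End R (Module.End R P) →ₗ[R] Module.End R P ⊗[R] (Module.End R P)ᵐᵒᵖ where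
  toFun F := ∑ i, ∑ j, ∑ k,
    (F ((f j).smulRight (x i)) * (f i).smulRight (x k)) ⊗ₜ op ((f k).smulRight (x j))
  map_add' F F' := by simp [add_mul, add_tmul, Finset.sum_add_distrib]
  map_smul' c F := by simp [smul_tmul', Finset.smul_sum]

theorem mulLeftRightInv_mulLeftRight (hxf : ∀ v, ∑ i, f i v • x i = v)
    (t : Module.End R P ⊗[R] (Module.End R P)ᵐᵒᵖ) :
    mulLeftRightInv x f (AlgHom.mulLeftRight R _ t) = t := by
  suffices (mulLeftRightInv x f).comp (AlgHom.mulLeftRight R _).toLinearMap = LinearMap.id from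
    congr($this t)
  refine TensorProduct.ext' fun a b => ?_
  induction b using MulOpposite.rec' with | _ b => ?_
  calc ∑ i, ∑ j, ∑ k, (a * (f j).smulRight (x i) * b * (f i).smulRight (x k)) ⊗ₜ
        op ((f k).smulRight (x j))
      = ∑ j, ∑ k, ∑ i, (f j (b (x k)) • (a * (f i).smulRight (x i))) ⊗ₜ
        op ((f k).smulRight (x j)) := by
        have hab (i j k : ι) : a * (f j).smulRight (x i) * b * (f i).smulRight (x k) =
            f j (b (x k)) • (a * (f i).smulRight (x i)) := by
          rw [mul_assoc, mul_assoc, ← mul_assoc _ b, smulRight_mul_mul_smulRight, mul_smul_comm]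
        simp only [hab]
        rw [Finset.sum_comm]
        exact Finset.sum_congr rfl fun _ _ => Finset.sum_comm
    _ = a ⊗ₜ op (∑ j, ∑ k, f j (b (x k)) • (f k).smulRight (x j)) := by
        simp only [← sum_tmul, ← Finset.mul_sum, sum_smulRight_eq_one hxf,
          mul_one, smul_tmul, ← op_smul, ← tmul_sum, ← Finset.op_sum]
    _ = a ⊗ₜ op b := by rw [sum_sum_smul_smulRight hxf]

theorem mulLeftRight_mulLeftRightInv (hxf : ∀ v, ∑ i, f i v • x i = v)
    (F : Module.End R (Module.End R P)) :
    AlgHom.mulLeftRight R _ (mulLeftRightInv x f F) = F := by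
  ext c : 1
  simp only [mulLeftRightInv, LinearMap.coe_mk, AddHom.coe_mk, map_sum, LinearMap.sum_apply,
    AlgHom.mulLeftRight_apply, unop_op]
  calc ∑ i, ∑ j, ∑ k, F ((f j).smulRight (x i)) * (f i).smulRight (x k) * c *
        (f k).smulRight (x j)
      = ∑ i, ∑ j, f i (c (x j)) • F ((f j).smulRight (x i)) := by
        have hc (i j k : ι) :
            F ((f j).smulRight (x i)) * (f i).smulRight (x k) * c * (f k).smulRight (x j) =
              f i (c (x j)) • (F ((f j).smulRight (x i)) * (f k).smulRight (x k)) := by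
          rw [mul_assoc, mul_assoc, ← mul_assoc _ c, smulRight_mul_mul_smulRight, mul_smul_comm]
        simp only [hc, ← Finset.smul_sum, ← Finset.mul_sum, sum_smulRight_eq_one hxf, mul_one]
    _ = F c := by simp only [← map_smul, ← map_sum, sum_sum_smul_smulRight hxf]

theorem bijective_mulLeftRight (hxf : ∀ v, ∑ i, f i v • x i = v) :
    Function.Bijective (AlgHom.mulLeftRight R (Module.End R P)) :=
  Function.bijective_iff_has_inverse.mpr ⟨mulLeftRightInv x f,
    mulLeftRightInv_mulLeftRight hxf, mulLeftRight_mulLeftRightInv hxf⟩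

end DualBasis

end Module.End

section Projective

variable (R : Type*) [CommRing R] (P : Type*) [AddCommMonoid P] [Module R P]
  [Module.Finite R P] [Module.Projective R P]

instance Module.Finite.moduleEnd_of_projective : Module.Finite R (Module.End R P) := by
  obtain ⟨n, r, s, -, -, hrs⟩ := Module.Finite.exists_comp_eq_id_of_projective R P
  have hsec := LinearMap.congr_fun (Module.End.sandwich_comp_sandwich hrs)
  exact .of_surjective (Module.End.sandwich r s) (Function.LeftInverse.surjective hsec)

instance Module.Projective.moduleEnd : Module.Projective R (Module.End R P) := by
  obtain ⟨n, r, s, -, -, hrs⟩ := Module.Finite.exists_comp_eq_id_of_projective R P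
  exact .of_split (Module.End.sandwich s r) (Module.End.sandwich r s)
    (Module.End.sandwich_comp_sandwich hrs)

theorem Module.Projective.exists_dual_basis :
    ∃ (n : ℕ) (x : Fin n → P) (f : Fin n → Module.Dual R P), ∀ v, ∑ i, f i v • x i = v := by
  obtain ⟨n, r, s, -, -, hrs⟩ := Module.Finite.exists_comp_eq_id_of_projective R P
  refine ⟨n, fun i => r (Pi.single i 1), fun i => LinearMap.proj i ∘ₗ s, fun v => ?_⟩
  calc ∑ i, s v i • r (Pi.single i 1) = r (∑ i, Pi.single i (s v i)) := by
        rw [map_sum]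
        refine Finset.sum_congr rfl fun i _ => ?_
        rw [← map_smul, ← Pi.single_smul', smul_eq_mul, mul_one]
    _ = v := by rw [Finset.univ_sum_single]; exact congr($hrs v)

instance IsAzumaya.moduleEnd [FaithfulSMul R P] : IsAzumaya R (Module.End R P) where
  bij := by
    obtain ⟨n, x, f, hxf⟩ := Module.Projective.exists_dual_basis R P
    exact Module.End.bijective_mulLeftRight hxf

end Projective

theorem mulLeftRight_eq (R A : Type*) [CommRing R] [Ring A] [Algebra R A] :
    mulLeftRight R A = (AlgHom.mulLeftRight R A).toLinearMap :=
  TensorProduct.ext' fun a b => by ext; simp [mulLeftRight]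

theorem IsAzumaya.isAzumaya' (R A : Type*) [CommRing R] [Ring A] [Algebra R A]
    [IsAzumaya R A] : IsAzumaya' R A :=
  ⟨inferInstance, inferInstance, inferInstance, mulLeftRight_eq R A ▸ IsAzumaya.bij⟩

/-- If `P` is a finitely generated projective faithful module over a commutative ring `R`,
then `Module.End R P` is an Azumaya `R`-algebra. -/
theorem end_isAzumaya (R : Type*) [CommRing R] (P : Type*) [AddCommGroup P] [Module R P]
    [Module.Finite R P] [Module.Projective R P] [FaithfulSMul R P] :
    IsAzumaya' R (Module.End R P) :=
  IsAzumaya.isAzumaya' R (Module.End R P)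
end

section
/- Skolem–Noether over a field: every k-algebra automorphism of the matrix algebra Mat_n(k), for k a field and n ≥ 1, is inner, i.e., of the form x ↦ u x u⁻¹ for some invertible matrix u. -/
open Matrix

theorem AlgEquiv.exists_matrix_units_conj {K ι : Type*} [Semifield K] [Fintype ι] [DecidableEq ι]
    (φ : Matrix ι ι K ≃ₐ[K] Matrix ι ι K) :
    ∃ u : (Matrix ι ι K)ˣ, ∀ x : Matrix ι ι K, φ x = u * x * (u⁻¹ : (Matrix ι ι K)ˣ) := by
  let e : Matrix ι ι K ≃ₐ[K] Module.End K (ι → K) := toLinAlgEquiv'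
  obtain ⟨T, hT⟩ := (e.symm.trans (φ.trans e)).eq_linearEquivConjAlgEquiv
  refine ⟨Units.map e.symm.toMonoidHom (LinearMap.GeneralLinearGroup.ofLinearEquiv T),
    fun x => e.injective ?_⟩
  have hφ : e (φ x) = T.conjAlgEquiv K (e x) := by simpa using congr($hT (e x))
  rw [hφ, map_mul, map_mul, Units.coe_map, Units.coe_map_inv]
  simp only [MulEquiv.toMonoidHom_eq_coe, MonoidHom.coe_coe, MulEquiv.coe_mk, toEquiv_eq_coe,
    EquivLike.coe_coe, apply_symm_apply]
  rfl

theorem skolem_noether_matrix_general (k : Type*) [Field k] (n : ℕ)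
    (φ : Matrix (Fin n) (Fin n) k ≃ₐ[k] Matrix (Fin n) (Fin n) k) :
    ∃ u : (Matrix (Fin n) (Fin n) k)ˣ, ∀ x, φ x = u.val * x * u.inv :=
  φ.exists_matrix_units_conj

/-- Skolem–Noether over a field: every `k`-algebra automorphism of the matrix algebra
`Matₙ(k)`, for `k` a field and `n ≥ 1`, is inner. -/
theorem skolem_noether_matrix (k : Type*) [Field k] (n : ℕ) (hn : 1 ≤ n)
    (φ : Matrix (Fin n) (Fin n) k ≃ₐ[k] Matrix (Fin n) (Fin n) k) :
    ∃ u : (Matrix (Fin n) (Fin n) k)ˣ, ∀ x, φ x = u.val * x * u.inv :=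
  skolem_noether_matrix_general k n φ
end
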